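/- arXiv:1711.01196 — 2 statements merged into one kernel-verified Lean document; each statement's English description precedes it below -/
import Mathlib

section
/- If M = (M_k) is a log-convex positive sequence with M₀ = 1, then for all n, k and nonnegative integers k₁,…,k_n with Σ i·k_i = n and Σ k_i = k, one has M₁^k · M_n ≥ M_k · M₁^{k₁} · M₂^{k₂} ⋯ M_n^{k_n}. -/
-- M(k+1) * M n ≤ M k * M(n+1) for k ≤ n (ratios M_{j+1}/M_j nondecreasing)
theorem aux_ratio_mono (M : ℕ → ℝ) (hpos : ∀ k, 0 < M k)
    (hlc : ∀ k : ℕ, 1 ≤ k → (M k) ^ 2 ≤ M (k - 1) * M (k + 1))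
    (k : ℕ) : ∀ n, k ≤ n → M (k + 1) * M n ≤ M k * M (n + 1) := by
  intro n hn
  induction n, hn using Nat.le_induction with
  | base => ring_nf; exact le_rfl
  | succ n hkn ih =>
    have h1 := hlc (n + 1) (by omega)
    simp only [Nat.add_sub_cancel] at h1
    have hp1 := hpos (n + 1)
    have hp2 := hpos (k + 1)
    nlinarith [hpos n, hpos k, hpos (n + 2), mul_le_mul_of_nonneg_left h1 hp2.le]

-- M(n+1) * M p ≤ M 1 * M(n+p) for 1 ≤ p
theorem aux_shift (M : ℕ → ℝ) (hpos : ∀ k, 0 < M k)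
    (hlc : ∀ k : ℕ, 1 ≤ k → (M k) ^ 2 ≤ M (k - 1) * M (k + 1))
    (n : ℕ) : ∀ p, 1 ≤ p → M (n + 1) * M p ≤ M 1 * M (n + p) := by
  intro p hp
  induction p, hp using Nat.le_induction with
  | base => exact le_of_eq (mul_comm _ _)
  | succ p hp ih =>
    have hB := aux_ratio_mono M hpos hlc p (n + p) (by omega)
    have : n + (p + 1) = (n + p) + 1 := by ring
    rw [this]
    nlinarith [hpos (n + p), hpos (n + 1), hpos p, hpos 1, hpos (n + p + 1),
      mul_le_mul_of_nonneg_left hB (hpos (n + 1)).le,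
      mul_le_mul_of_nonneg_left ih (hpos (n + p + 1)).le]

theorem aux_multiset (M : ℕ → ℝ) (hpos : ∀ k, 0 < M k) (hM0 : M 0 = 1)
    (hlc : ∀ k : ℕ, 1 ≤ k → (M k) ^ 2 ≤ M (k - 1) * M (k + 1)) :
    ∀ s : Multiset ℕ, (∀ p ∈ s, 1 ≤ p) →
      M (Multiset.card s) * (s.map M).prod ≤ M 1 ^ (Multiset.card s) * M s.sum := by
  intro s
  induction s using Multiset.induction with
  | empty => simp [hM0]
  | cons p s ih =>
    intro h
    have hp : 1 ≤ p := h p (by simp)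
    have hs : ∀ q ∈ s, 1 ≤ q := fun q hq => h q (by simp [hq])
    have ihs := ih hs
    have hcard : Multiset.card s ≤ s.sum := by
      have := Multiset.card_nsmul_le_sum hs
      simpa using this
    set c := Multiset.card s with hc
    have hB := aux_ratio_mono M hpos hlc c s.sum hcard
    have hC := aux_shift M hpos hlc s.sum p hp
    have hprodpos : 0 < (s.map M).prod := by
      apply Multiset.prod_pos
      intro x hx
      obtain ⟨q, _, rfl⟩ := Multiset.mem_map.mp hx
      exact hpos q
    simp only [Multiset.card_cons, Multiset.map_cons, Multiset.prod_cons, Multiset.sum_cons]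
    have hpowpos : (0:ℝ) < M 1 ^ c := pow_pos (hpos 1) c
    have key : M (c + 1) * (M p * M s.sum) ≤ M 1 * (M c * M (s.sum + p)) := by
      calc M (c + 1) * (M p * M s.sum) = (M (c+1) * M s.sum) * M p := by ring
        _ ≤ (M c * M (s.sum + 1)) * M p := by
            exact mul_le_mul_of_nonneg_right hB (hpos p).le
        _ = M c * (M (s.sum + 1) * M p) := by ring
        _ ≤ M c * (M 1 * M (s.sum + p)) := by
            exact mul_le_mul_of_nonneg_left hC (hpos c).le
        _ = M 1 * (M c * M (s.sum + p)) := by ring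
    have hsumeq : p + s.sum = s.sum + p := by ring
    rw [hsumeq, pow_succ]
    -- goal : M (c + 1) * (M p * (s.map M).prod) ≤ M 1 ^ c * M 1 * M (s.sum + p)
    have step1 : M c * (M (c + 1) * (M p * (s.map M).prod))
        ≤ M c * (M 1 ^ c * M 1 * M (s.sum + p)) := by
      calc M c * (M (c + 1) * (M p * (s.map M).prod))
          = (M (c+1) * M p) * (M c * (s.map M).prod) := by ring
        _ ≤ (M (c+1) * M p) * (M 1 ^ c * M s.sum) := by
            exact mul_le_mul_of_nonneg_left ihs
              (mul_nonneg (hpos _).le (hpos _).le)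
        _ = M 1 ^ c * (M (c+1) * (M p * M s.sum)) := by ring
        _ ≤ M 1 ^ c * (M 1 * (M c * M (s.sum + p))) := by
            exact mul_le_mul_of_nonneg_left key hpowpos.le
        _ = M c * (M 1 ^ c * M 1 * M (s.sum + p)) := by ring
    exact le_of_mul_le_mul_left step1 (hpos c)

theorem logConvex_composition_inequality (M : ℕ → ℝ)
    (hpos : ∀ k, 0 < M k) (hM0 : M 0 = 1)
    (hlc : ∀ k : ℕ, 1 ≤ k → (M k) ^ 2 ≤ M (k - 1) * M (k + 1))
    (n k : ℕ) (κ : Fin n → ℕ)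
    (hsum1 : ∑ i : Fin n, ((i : ℕ) + 1) * κ i = n)
    (hsum2 : ∑ i : Fin n, κ i = k) :
    M k * ∏ i : Fin n, (M ((i : ℕ) + 1)) ^ (κ i) ≤ (M 1) ^ k * M n := by
  set s : Multiset ℕ := ∑ i : Fin n, Multiset.replicate (κ i) ((i : ℕ) + 1) with hsdef
  have hmem : ∀ p ∈ s, 1 ≤ p := by
    intro p hp
    rw [hsdef, Multiset.mem_sum] at hp
    obtain ⟨i, _, hmi⟩ := hp
    rw [Multiset.eq_of_mem_replicate hmi]
    omega
  have hcard : Multiset.card s = k := by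
    rw [hsdef, Multiset.card_sum]
    simpa using hsum2
  have hsum : s.sum = n := by
    rw [hsdef, Multiset.sum_sum]
    simp only [Multiset.sum_replicate, smul_eq_mul]
    rw [show (∑ i : Fin n, κ i * ((i : ℕ) + 1)) = ∑ i : Fin n, ((i : ℕ) + 1) * κ i from
      Finset.sum_congr rfl fun i _ => mul_comm _ _]
    exact hsum1
  have hprod : (s.map M).prod = ∏ i : Fin n, (M ((i : ℕ) + 1)) ^ (κ i) := by
    rw [hsdef, ← Multiset.coe_mapAddMonoidHom, map_sum, Multiset.prod_sum]
    simp only [Multiset.coe_mapAddMonoidHom]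
    exact Finset.prod_congr rfl fun i _ => by
      rw [Multiset.map_replicate, Multiset.prod_replicate]
  have := aux_multiset M hpos hM0 hlc s hmem
  rw [hcard, hsum, hprod] at this
  exact this
end

section
/- Let 1 ≤ p ≤ ∞ and let g, f₁, f₂ : ℝ^d → ℝ^d be smooth with derivatives in the appropriate L^p spaces, such that Id + f_i are diffeomorphisms of ℝ^d with c_i := inf_x det d(x + f_i(x)) > 0 (i = 1,2). Then for every k ∈ ℕ there is C = C(c₁,c₂,k) such that ‖g∘(Id+f₁) − g∘(Id+f₂)‖_{W^{k,p}} ≤ C ‖g‖_{W^{k+1,∞}} (1 + max_i ‖f_i‖_{W^{k,∞}})^k ‖f₁ − f₂‖_{W^{k,p}}. -/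
open MeasureTheory Set
open scoped ContDiff

section helpers
variable {E F : Type} [NormedAddCommGroup E] [NormedSpace ℝ E]
  [NormedAddCommGroup F] [NormedSpace ℝ F]

/-- derivative of `x ↦ x + f x` as a function -/
lemma fderiv_id_add (f : E → E) (hf : ContDiff ℝ ∞ f) :
    fderiv ℝ (fun z => z + f z) =
      (fun _ : E => ContinuousLinearMap.id ℝ E) + fun y => fderiv ℝ f y := by
  funext y
  rw [Pi.add_apply,
    fderiv_fun_add differentiableAt_fun_id ((hf.differentiable (by simp)) y), fderiv_fun_id]

/-- bound on iterated derivatives of the derivative of `x ↦ x + f x` -/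
lemma norm_iteratedFDeriv_fderiv_id_add (f : E → E) (hf : ContDiff ℝ ∞ f) (m : ℕ) (x : E)
    (B : ℝ) (hB : ‖iteratedFDeriv ℝ (m + 1) f x‖ ≤ B) :
    ‖iteratedFDeriv ℝ m (fderiv ℝ (fun z => z + f z)) x‖ ≤ 1 + B := by
  rw [fderiv_id_add f hf,
    iteratedFDeriv_add_apply contDiff_const.contDiffAt ((hf.fderiv_right (m := ∞) (by exact_mod_cast le_refl _)).of_le (by exact_mod_cast le_top)).contDiffAt]
  refine (norm_add_le _ _).trans ?_
  have h2 : ‖iteratedFDeriv ℝ m (fderiv ℝ f) x‖ ≤ B := by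
    rw [norm_iteratedFDeriv_fderiv]; exact hB
  cases m with
  | zero =>
    rw [norm_iteratedFDeriv_zero]
    have := ContinuousLinearMap.norm_id_le (E := E) (𝕜 := ℝ)
    linarith
  | succ m =>
    rw [iteratedFDeriv_const_of_ne (Nat.succ_ne_zero m)]
    simp only [Pi.zero_apply, norm_zero]
    linarith

/-- bound on iterated derivatives of `x ↦ x + f x` itself, for `1 ≤ m` -/
lemma norm_iteratedFDeriv_id_add (f : E → E) (hf : ContDiff ℝ ∞ f) (m : ℕ) (x : E)
    (B : ℝ) (hB : ‖iteratedFDeriv ℝ (m + 1) f x‖ ≤ B) :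
    ‖iteratedFDeriv ℝ (m + 1) (fun z => z + f z) x‖ ≤ 1 + B := by
  rw [← norm_iteratedFDeriv_fderiv]
  exact norm_iteratedFDeriv_fderiv_id_add f hf m x B hB

/-- difference of the derivatives of `x ↦ x + fᵢ x` is the derivative of `f₁ - f₂` -/
lemma fderiv_id_add_sub (f₁ f₂ : E → E) (hf₁ : ContDiff ℝ ∞ f₁) (hf₂ : ContDiff ℝ ∞ f₂) :
    (fun y => fderiv ℝ (fun z => z + f₁ z) y - fderiv ℝ (fun z => z + f₂ z) y) =
      fderiv ℝ (fun z => f₁ z - f₂ z) := by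
  funext y
  rw [fderiv_id_add f₁ hf₁, fderiv_id_add f₂ hf₂,
    fderiv_fun_sub ((hf₁.differentiable (by simp)) y) ((hf₂.differentiable (by simp)) y)]
  simp only [Pi.add_apply]
  abel

end helpers

lemma key_bound {E : Type} [NormedAddCommGroup E] [NormedSpace ℝ E] (j : ℕ) :
    ∃ K : ℝ, 1 ≤ K ∧
    ∀ {F : Type} [NormedAddCommGroup F] [NormedSpace ℝ F]
      (g : E → F) (f₁ f₂ : E → E), ContDiff ℝ ∞ g → ContDiff ℝ ∞ f₁ → ContDiff ℝ ∞ f₂ →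
      ∀ (G B : ℝ), 0 ≤ G → 0 ≤ B →
      (∀ i, i ≤ j + 1 → ∀ y, ‖iteratedFDeriv ℝ i g y‖ ≤ G) →
      (∀ i, i ≤ j → ∀ y, ‖iteratedFDeriv ℝ i f₁ y‖ ≤ B ∧ ‖iteratedFDeriv ℝ i f₂ y‖ ≤ B) →
      ∀ i, i ≤ j → ∀ x,
      ‖iteratedFDeriv ℝ i (fun z => g (z + f₁ z) - g (z + f₂ z)) x‖ ≤
        K * G * (1 + B) ^ j * ∑ a ∈ Finset.range (j + 1),
          ‖iteratedFDeriv ℝ a (fun z => f₁ z - f₂ z) x‖ := by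
  induction j with
  | zero =>
    refine ⟨1, le_rfl, ?_⟩
    intro F _ _ g f₁ f₂ hg hf₁ hf₂ G B hG0 hB0 hG hB i hi x
    interval_cases i
    simp only [norm_iteratedFDeriv_zero, zero_add, Finset.sum_range_one, pow_zero, one_mul,
      mul_one]
    have hd : ∀ y ∈ (univ : Set E), DifferentiableAt ℝ g y :=
      fun y _ => (hg.differentiable (by simp)) y
    have hbound : ∀ y ∈ (univ : Set E), ‖fderiv ℝ g y‖ ≤ G := by
      intro y _
      calc ‖fderiv ℝ g y‖ = ‖iteratedFDeriv ℝ 0 (fderiv ℝ g) y‖ := norm_iteratedFDeriv_zero.symm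
        _ = ‖iteratedFDeriv ℝ 1 g y‖ := norm_iteratedFDeriv_fderiv
        _ ≤ G := hG 1 (by norm_num) y
    have hmvt := convex_univ.norm_image_sub_le_of_norm_fderiv_le hd hbound
      (mem_univ (x + f₂ x)) (mem_univ (x + f₁ x))
    have he : x + f₁ x - (x + f₂ x) = f₁ x - f₂ x := by abel
    rw [he] at hmvt
    linarith
  | succ j IH =>
    obtain ⟨K, hK1, hIH⟩ := IH
    have h2j : (0:ℝ) < 2 ^ j := by positivity
    have hjf : (0:ℝ) < (j.factorial : ℝ) := by exact_mod_cast j.factorial_pos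
    refine ⟨2 ^ j * K + 2 ^ j * (j.factorial : ℝ) + K, by nlinarith, ?_⟩
    intro F _ _ g f₁ f₂ hg hf₁ hf₂ G B hG0 hB0 hG hB i hi x
    have hu : ContDiff ℝ ∞ (fun z => f₁ z - f₂ z) := hf₁.sub hf₂
    have hS0 : (0:ℝ) ≤ ∑ a ∈ Finset.range (j + 1 + 1),
        ‖iteratedFDeriv ℝ a (fun z => f₁ z - f₂ z) x‖ :=
      Finset.sum_nonneg fun _ _ => norm_nonneg _
    have hSS : ∑ a ∈ Finset.range (j + 1), ‖iteratedFDeriv ℝ a (fun z => f₁ z - f₂ z) x‖ ≤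
        ∑ a ∈ Finset.range (j + 1 + 1), ‖iteratedFDeriv ℝ a (fun z => f₁ z - f₂ z) x‖ :=
      Finset.sum_le_sum_of_subset_of_nonneg (Finset.range_subset_range.2 (by omega))
        (fun _ _ _ => norm_nonneg _)
    have h1B : (1:ℝ) ≤ 1 + B := by linarith
    have h1B0 : (0:ℝ) ≤ 1 + B := by linarith
    have hpow : (1 + B) ^ j ≤ (1 + B) ^ (j + 1) := pow_le_pow_right₀ h1B (Nat.le_succ j)
    rcases Nat.lt_or_ge i (j + 1) with hij | hij
    · -- use the inductive bound directly
      have hle := hIH g f₁ f₂ hg hf₁ hf₂ G B hG0 hB0 (fun m hm y => hG m (by omega) y)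
        (fun m hm y => hB m (by omega) y) i (by omega) x
      refine hle.trans ?_
      have hKK : K ≤ 2 ^ j * K + 2 ^ j * (j.factorial : ℝ) + K := by nlinarith
      gcongr
    · -- main case : i = j + 1
      have hi' : i = j + 1 := by omega
      subst hi'
      have hcast : ((j : ℕ) : WithTop ℕ∞) ≤ ∞ := by exact_mod_cast le_top
      have hg' : ContDiff ℝ ∞ (fderiv ℝ g) :=
        hg.fderiv_right (m := ∞) (by exact_mod_cast le_refl _)
      have hφ₁ : ContDiff ℝ ∞ (fun z : E => z + f₁ z) := contDiff_id.add hf₁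
      have hφ₂ : ContDiff ℝ ∞ (fun z : E => z + f₂ z) := contDiff_id.add hf₂
      have hW₁ : ContDiff ℝ ∞ (fderiv ℝ (fun z : E => z + f₁ z)) :=
        hφ₁.fderiv_right (m := ∞) (by exact_mod_cast le_refl _)
      have hW₂ : ContDiff ℝ ∞ (fderiv ℝ (fun z : E => z + f₂ z)) :=
        hφ₂.fderiv_right (m := ∞) (by exact_mod_cast le_refl _)
      have hvd : ContDiff ℝ ∞
          (fun y => fderiv ℝ g (y + f₁ y) - fderiv ℝ g (y + f₂ y)) :=
        (hg'.comp hφ₁).sub (hg'.comp hφ₂)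
      have hA₂ : ContDiff ℝ ∞ (fun y => fderiv ℝ g (y + f₂ y)) := hg'.comp hφ₂
      have hwd : ContDiff ℝ ∞ (fun y =>
          fderiv ℝ (fun z : E => z + f₁ z) y - fderiv ℝ (fun z : E => z + f₂ z) y) :=
        hW₁.sub hW₂
      -- the key pointwise identity for the derivative
      have hkey : fderiv ℝ (fun z => g (z + f₁ z) - g (z + f₂ z)) =
          (fun y => (ContinuousLinearMap.compL ℝ E E F)
              (fderiv ℝ g (y + f₁ y) - fderiv ℝ g (y + f₂ y))
              (fderiv ℝ (fun z : E => z + f₁ z) y)) +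
          (fun y => (ContinuousLinearMap.compL ℝ E E F)
              (fderiv ℝ g (y + f₂ y))
              (fderiv ℝ (fun z : E => z + f₁ z) y -
                fderiv ℝ (fun z : E => z + f₂ z) y)) := by
        funext y
        have hdg₁ : DifferentiableAt ℝ g (y + f₁ y) :=
          (hg.differentiable (by simp)) _
        have hdg₂ : DifferentiableAt ℝ g (y + f₂ y) :=
          (hg.differentiable (by simp)) _
        have hdφ₁ : DifferentiableAt ℝ (fun z : E => z + f₁ z) y :=
          (hφ₁.differentiable (by simp)) y
        have hdφ₂ : DifferentiableAt ℝ (fun z : E => z + f₂ z) y :=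
          (hφ₂.differentiable (by simp)) y
        have hd₁ : DifferentiableAt ℝ (fun z => g (z + f₁ z)) y := hdg₁.comp y hdφ₁
        have hd₂ : DifferentiableAt ℝ (fun z => g (z + f₂ z)) y := hdg₂.comp y hdφ₂
        have hc₁ : fderiv ℝ (fun z => g (z + f₁ z)) y =
            (fderiv ℝ g (y + f₁ y)).comp (fderiv ℝ (fun z : E => z + f₁ z) y) :=
          fderiv_comp y hdg₁ hdφ₁
        have hc₂ : fderiv ℝ (fun z => g (z + f₂ z)) y =
            (fderiv ℝ g (y + f₂ y)).comp (fderiv ℝ (fun z : E => z + f₂ z) y) :=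
          fderiv_comp y hdg₂ hdφ₂
        rw [fderiv_fun_sub hd₁ hd₂, hc₁, hc₂, Pi.add_apply]
        ext v
        simp only [ContinuousLinearMap.coe_sub', Pi.sub_apply,
          ContinuousLinearMap.coe_comp', Function.comp_apply,
          ContinuousLinearMap.compL_apply, ContinuousLinearMap.add_apply,
          ContinuousLinearMap.sub_apply, map_sub]
        abel
      -- bounds on the pieces
      have hvd_bound : ∀ m, m ≤ j → ‖iteratedFDeriv ℝ m
          (fun y => fderiv ℝ g (y + f₁ y) - fderiv ℝ g (y + f₂ y)) x‖ ≤
          K * G * (1 + B) ^ j *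
            ∑ a ∈ Finset.range (j + 1 + 1), ‖iteratedFDeriv ℝ a (fun z => f₁ z - f₂ z) x‖ := by
        intro m hm
        have hGb : ∀ i, i ≤ j + 1 → ∀ y, ‖iteratedFDeriv ℝ i (fderiv ℝ g) y‖ ≤ G := by
          intro i hi y
          rw [norm_iteratedFDeriv_fderiv]
          exact hG (i + 1) (by omega) y
        have := hIH (fderiv ℝ g) f₁ f₂ hg' hf₁ hf₂ G B hG0 hB0 hGb
          (fun m hm y => hB m (by omega) y) m hm x
        refine this.trans ?_
        gcongr
      have hW₁_bound : ∀ m, m ≤ j →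
          ‖iteratedFDeriv ℝ m (fderiv ℝ (fun z : E => z + f₁ z)) x‖ ≤ 1 + B := by
        intro m hm
        exact norm_iteratedFDeriv_fderiv_id_add f₁ hf₁ m x B (hB (m + 1) (by omega) x).1
      have hwd_bound : ∀ m, m ≤ j → ‖iteratedFDeriv ℝ m (fun y =>
          fderiv ℝ (fun z : E => z + f₁ z) y - fderiv ℝ (fun z : E => z + f₂ z) y) x‖ ≤
          ∑ a ∈ Finset.range (j + 1 + 1), ‖iteratedFDeriv ℝ a (fun z => f₁ z - f₂ z) x‖ := by
        intro m hm
        rw [fderiv_id_add_sub f₁ f₂ hf₁ hf₂, norm_iteratedFDeriv_fderiv]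
        exact Finset.single_le_sum (f := fun a =>
            ‖iteratedFDeriv ℝ a (fun z => f₁ z - f₂ z) x‖)
          (fun a _ => norm_nonneg _) (Finset.mem_range.2 (by omega))
      have hA₂_bound : ∀ m, m ≤ j → ‖iteratedFDeriv ℝ m (fun y => fderiv ℝ g (y + f₂ y)) x‖ ≤
          (j.factorial : ℝ) * G * (1 + B) ^ j := by
        intro m hm
        have hC : ∀ i, i ≤ m →
            ‖iteratedFDeriv ℝ i (fderiv ℝ g) ((fun z : E => z + f₂ z) x)‖ ≤ G := by
          intro i hi
          rw [norm_iteratedFDeriv_fderiv]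
          exact hG (i + 1) (by omega) _
        have hD : ∀ i, 1 ≤ i → i ≤ m →
            ‖iteratedFDeriv ℝ i (fun z : E => z + f₂ z) x‖ ≤ (1 + B) ^ i := by
          intro i h1i him
          obtain ⟨i', rfl⟩ : ∃ i', i = i' + 1 := ⟨i - 1, by omega⟩
          refine (norm_iteratedFDeriv_id_add f₂ hf₂ i' x B (hB (i' + 1) (by omega) x).2).trans ?_
          exact le_self_pow₀ h1B (Nat.succ_ne_zero _)
        have hcomp := norm_iteratedFDeriv_comp_le (g := fderiv ℝ g)
          (f := fun z : E => z + f₂ z) (n := m) (N := ∞) hg' hφ₂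
          (by exact_mod_cast le_top) x hC hD
        refine hcomp.trans ?_
        gcongr <;> first | exact h1B | omega | exact_mod_cast Nat.factorial_le hm
      have hK0 : (0:ℝ) ≤ K := by linarith
      have ht₁ : ContDiff ℝ ∞ (fun y => (ContinuousLinearMap.compL ℝ E E F)
          (fderiv ℝ g (y + f₁ y) - fderiv ℝ g (y + f₂ y))
          (fderiv ℝ (fun z : E => z + f₁ z) y)) := hvd.clm_comp hW₁
      have ht₂ : ContDiff ℝ ∞ (fun y => (ContinuousLinearMap.compL ℝ E E F)
          (fderiv ℝ g (y + f₂ y))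
          (fderiv ℝ (fun z : E => z + f₁ z) y -
            fderiv ℝ (fun z : E => z + f₂ z) y)) := hA₂.clm_comp hwd
      set S : ℝ := ∑ a ∈ Finset.range (j + 1 + 1),
        ‖iteratedFDeriv ℝ a (fun z => f₁ z - f₂ z) x‖ with hSdef
      have hC0 : (0:ℝ) ≤ K * G * (1 + B) ^ j * S :=
        mul_nonneg (mul_nonneg (mul_nonneg hK0 hG0) (pow_nonneg h1B0 _)) hS0
      have hb₁ : ‖iteratedFDeriv ℝ j (fun y => (ContinuousLinearMap.compL ℝ E E F)
          (fderiv ℝ g (y + f₁ y) - fderiv ℝ g (y + f₂ y))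
          (fderiv ℝ (fun z : E => z + f₁ z) y)) x‖ ≤
          2 ^ j * (K * G * (1 + B) ^ j * S * (1 + B)) := by
        refine ((ContinuousLinearMap.compL ℝ E E F).norm_iteratedFDeriv_le_of_bilinear_of_le_one
          hvd hW₁ x hcast (ContinuousLinearMap.norm_compL_le ℝ E E F)).trans ?_
        have hstep : ∀ i ∈ Finset.range (j + 1), (j.choose i : ℝ) *
            ‖iteratedFDeriv ℝ i (fun y => fderiv ℝ g (y + f₁ y) - fderiv ℝ g (y + f₂ y)) x‖ *
            ‖iteratedFDeriv ℝ (j - i) (fderiv ℝ (fun z : E => z + f₁ z)) x‖ ≤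
            (j.choose i : ℝ) * (K * G * (1 + B) ^ j * S * (1 + B)) := by
          intro i hi
          have h1 := hvd_bound i (by have := Finset.mem_range.1 hi; omega)
          have h2 := hW₁_bound (j - i) (by omega)
          refine le_trans (mul_le_mul (mul_le_mul_of_nonneg_left h1 (Nat.cast_nonneg _)) h2
            (norm_nonneg _) (mul_nonneg (Nat.cast_nonneg _) hC0)) (le_of_eq (by ring))
        refine (Finset.sum_le_sum hstep).trans (le_of_eq ?_)
        rw [← Finset.sum_mul]
        congr 1
        exact_mod_cast Nat.sum_range_choose j
      have hb₂ : ‖iteratedFDeriv ℝ j (fun y => (ContinuousLinearMap.compL ℝ E E F)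
          (fderiv ℝ g (y + f₂ y))
          (fderiv ℝ (fun z : E => z + f₁ z) y -
            fderiv ℝ (fun z : E => z + f₂ z) y)) x‖ ≤
          2 ^ j * ((j.factorial : ℝ) * G * (1 + B) ^ j * S) := by
        refine ((ContinuousLinearMap.compL ℝ E E F).norm_iteratedFDeriv_le_of_bilinear_of_le_one
          hA₂ hwd x hcast (ContinuousLinearMap.norm_compL_le ℝ E E F)).trans ?_
        have hstep : ∀ i ∈ Finset.range (j + 1), (j.choose i : ℝ) *
            ‖iteratedFDeriv ℝ i (fun y => fderiv ℝ g (y + f₂ y)) x‖ *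
            ‖iteratedFDeriv ℝ (j - i) (fun y =>
              fderiv ℝ (fun z : E => z + f₁ z) y - fderiv ℝ (fun z : E => z + f₂ z) y) x‖ ≤
            (j.choose i : ℝ) * ((j.factorial : ℝ) * G * (1 + B) ^ j * S) := by
          intro i hi
          have h1 := hA₂_bound i (by have := Finset.mem_range.1 hi; omega)
          have h2 := hwd_bound (j - i) (by omega)
          refine le_trans (mul_le_mul (mul_le_mul_of_nonneg_left h1 (Nat.cast_nonneg _)) h2
            (norm_nonneg _) (mul_nonneg (Nat.cast_nonneg _)
              (mul_nonneg (mul_nonneg (Nat.cast_nonneg _) hG0) (pow_nonneg h1B0 _))))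
            (le_of_eq (by ring))
        refine (Finset.sum_le_sum hstep).trans (le_of_eq ?_)
        rw [← Finset.sum_mul]
        congr 1
        exact_mod_cast Nat.sum_range_choose j
      calc ‖iteratedFDeriv ℝ (j + 1) (fun z => g (z + f₁ z) - g (z + f₂ z)) x‖
          = ‖iteratedFDeriv ℝ j (fderiv ℝ (fun z => g (z + f₁ z) - g (z + f₂ z))) x‖ :=
            norm_iteratedFDeriv_fderiv.symm
        _ = ‖iteratedFDeriv ℝ j (fun y => (ContinuousLinearMap.compL ℝ E E F)
              (fderiv ℝ g (y + f₁ y) - fderiv ℝ g (y + f₂ y))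
              (fderiv ℝ (fun z : E => z + f₁ z) y)) x +
            iteratedFDeriv ℝ j (fun y => (ContinuousLinearMap.compL ℝ E E F)
              (fderiv ℝ g (y + f₂ y))
              (fderiv ℝ (fun z : E => z + f₁ z) y -
                fderiv ℝ (fun z : E => z + f₂ z) y)) x‖ := by
            rw [hkey, iteratedFDeriv_add_apply (ht₁.of_le hcast).contDiffAt (ht₂.of_le hcast).contDiffAt]
        _ ≤ _ + _ := norm_add_le _ _
        _ ≤ 2 ^ j * (K * G * (1 + B) ^ j * S * (1 + B)) +
            2 ^ j * ((j.factorial : ℝ) * G * (1 + B) ^ j * S) := add_le_add hb₁ hb₂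
        _ ≤ (2 ^ j * K + 2 ^ j * (j.factorial : ℝ) + K) * G * (1 + B) ^ (j + 1) * S := by
            rw [pow_succ]
            nlinarith [mul_nonneg (mul_nonneg (mul_nonneg (mul_nonneg hK0 hG0)
                (pow_nonneg h1B0 j)) h1B0) hS0,
              mul_nonneg (mul_nonneg (mul_nonneg (mul_nonneg (le_of_lt h2j) hjf.le) hG0)
                (pow_nonneg h1B0 j)) (mul_nonneg hB0 hS0)]

noncomputable def sobolevNorm (d : ℕ) (k : ℕ) (p : ENNReal)
    (f : (Fin d → ℝ) → (Fin d → ℝ)) : ENNReal :=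
  ∑ j ∈ Finset.range (k + 1),
    eLpNorm (fun x => ‖iteratedFDeriv ℝ j f x‖) p volume

lemma pointwise_le_eLpNormTop_toReal {d : ℕ} (h : (Fin d → ℝ) → ℝ) (hc : Continuous h)
    (hfin : eLpNorm h ⊤ volume ≠ ⊤) (x : Fin d → ℝ) :
    ‖h x‖ ≤ (eLpNorm h ⊤ volume).toReal := by
  set c := (eLpNorm h ⊤ volume).toReal with hcdef
  have hae : ∀ᵐ y ∂(volume : Measure (Fin d → ℝ)), ‖h y‖ ≤ c := by
    filter_upwards [ae_le_eLpNormEssSup (f := h) (μ := (volume : Measure (Fin d → ℝ)))] with y hy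
    have h2 : (‖h y‖₊ : ENNReal) ≤ eLpNorm h ⊤ volume := by
      rw [eLpNorm_exponent_top]; exact_mod_cast hy
    have := ENNReal.toReal_mono hfin h2
    simpa [hcdef] using this
  have hdense : Dense {y : Fin d → ℝ | ‖h y‖ ≤ c} := Measure.dense_of_ae hae
  have hclosed : IsClosed {y : Fin d → ℝ | ‖h y‖ ≤ c} := isClosed_le hc.norm continuous_const
  have huniv := hclosed.closure_eq ▸ hdense.closure_eq
  exact (huniv ▸ mem_univ x : x ∈ {y : Fin d → ℝ | ‖h y‖ ≤ c})

set_option maxHeartbeats 1000000 in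
theorem composition_difference_sobolev_estimate (d : ℕ) (p : ENNReal) (hp : 1 ≤ p)
    (c₁ c₂ : ℝ) (hc₁ : 0 < c₁) (hc₂ : 0 < c₂) (k : ℕ) :
    ∃ C : NNReal, 0 < C ∧
      ∀ (g f₁ f₂ : (Fin d → ℝ) → (Fin d → ℝ)),
        ContDiff ℝ (⊤ : ℕ∞) g → ContDiff ℝ (⊤ : ℕ∞) f₁ → ContDiff ℝ (⊤ : ℕ∞) f₂ →
        (∀ j, sobolevNorm d j ⊤ g ≠ ⊤) →
        (∀ j, sobolevNorm d j p f₁ ≠ ⊤) → (∀ j, sobolevNorm d j p f₂ ≠ ⊤) →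
        (∀ j, sobolevNorm d j ⊤ f₁ ≠ ⊤) → (∀ j, sobolevNorm d j ⊤ f₂ ≠ ⊤) →
        Function.Bijective (fun x => x + f₁ x) →
        Function.Bijective (fun x => x + f₂ x) →
        (∀ x, c₁ ≤ (fderiv ℝ (fun y => y + f₁ y) x).det) →
        (∀ x, c₂ ≤ (fderiv ℝ (fun y => y + f₂ y) x).det) →
        sobolevNorm d k p ((g ∘ fun x => x + f₁ x) - (g ∘ fun x => x + f₂ x))
          ≤ (C : ENNReal) * sobolevNorm d (k + 1) ⊤ g
            * (1 + max (sobolevNorm d k ⊤ f₁) (sobolevNorm d k ⊤ f₂)) ^ k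
            * sobolevNorm d k p (f₁ - f₂) := by
  obtain ⟨K, hK1, hkey⟩ := key_bound (E := Fin d → ℝ) k
  have hK0 : (0:ℝ) ≤ K := by linarith
  refine ⟨((k + 1 : ℕ) : NNReal) * Real.toNNReal K, ?_, ?_⟩
  · exact mul_pos (by exact_mod_cast Nat.succ_pos k) (Real.toNNReal_pos.2 (by linarith))
  intro g f₁ f₂ hg hf₁ hf₂ hgT hf₁p hf₂p hf₁T hf₂T _ _ _ _
  have hg' : ContDiff ℝ ∞ g := hg.of_le (by simp)
  have hf₁' : ContDiff ℝ ∞ f₁ := hf₁.of_le (by simp)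
  have hf₂' : ContDiff ℝ ∞ f₂ := hf₂.of_le (by simp)
  have hu : ContDiff ℝ ∞ (fun z => f₁ z - f₂ z) := hf₁'.sub hf₂'
  -- individual finiteness of the sup-norm terms
  have hterm_fin : ∀ (f : (Fin d → ℝ) → (Fin d → ℝ)), (∀ j, sobolevNorm d j ⊤ f ≠ ⊤) →
      ∀ i, eLpNorm (fun x => ‖iteratedFDeriv ℝ i f x‖) ⊤ volume ≠ ⊤ := by
    intro f hf i
    have h1 : sobolevNorm d i ⊤ f < ⊤ := lt_top_iff_ne_top.2 (hf i)
    rw [sobolevNorm] at h1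
    exact (ENNReal.sum_lt_top.1 h1 i (Finset.mem_range.2 (by omega))).ne
  -- sup bounds
  set Bg : ℝ := ∑ i ∈ Finset.range (k + 2),
    (eLpNorm (fun x => ‖iteratedFDeriv ℝ i g x‖) ⊤ volume).toReal with hBgdef
  have hBg0 : 0 ≤ Bg := Finset.sum_nonneg fun _ _ => ENNReal.toReal_nonneg
  have hptw : ∀ (f : (Fin d → ℝ) → (Fin d → ℝ)), ContDiff ℝ ∞ f →
      (∀ j, sobolevNorm d j ⊤ f ≠ ⊤) → ∀ i (y : Fin d → ℝ), ‖iteratedFDeriv ℝ i f y‖ ≤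
      (eLpNorm (fun x => ‖iteratedFDeriv ℝ i f x‖) ⊤ volume).toReal := by
    intro f hf hfT i y
    have hc : Continuous fun x => ‖iteratedFDeriv ℝ i f x‖ :=
      (hf.continuous_iteratedFDeriv (by exact_mod_cast le_top)).norm
    have := pointwise_le_eLpNormTop_toReal _ hc (hterm_fin f hfT i) y
    simpa using this
  have hgb : ∀ i, i ≤ k + 1 → ∀ y, ‖iteratedFDeriv ℝ i g y‖ ≤ Bg := by
    intro i hi y
    refine (hptw g hg' hgT i y).trans ?_
    exact Finset.single_le_sum (f := fun i =>
        (eLpNorm (fun x => ‖iteratedFDeriv ℝ i g x‖) ⊤ volume).toReal)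
      (fun _ _ => ENNReal.toReal_nonneg) (Finset.mem_range.2 (by omega))
  set B₁ : ℝ := ∑ i ∈ Finset.range (k + 1),
    (eLpNorm (fun x => ‖iteratedFDeriv ℝ i f₁ x‖) ⊤ volume).toReal with hB₁def
  set B₂ : ℝ := ∑ i ∈ Finset.range (k + 1),
    (eLpNorm (fun x => ‖iteratedFDeriv ℝ i f₂ x‖) ⊤ volume).toReal with hB₂def
  have hB₁0 : 0 ≤ B₁ := Finset.sum_nonneg fun _ _ => ENNReal.toReal_nonneg
  have hB₂0 : 0 ≤ B₂ := Finset.sum_nonneg fun _ _ => ENNReal.toReal_nonneg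
  set Bf : ℝ := max B₁ B₂ with hBfdef
  have hBf0 : 0 ≤ Bf := le_trans hB₁0 (le_max_left _ _)
  have hfb : ∀ i, i ≤ k → ∀ y, ‖iteratedFDeriv ℝ i f₁ y‖ ≤ Bf ∧
      ‖iteratedFDeriv ℝ i f₂ y‖ ≤ Bf := by
    intro i hi y
    constructor
    · refine (hptw f₁ hf₁' hf₁T i y).trans (le_trans ?_ (le_max_left _ _))
      exact Finset.single_le_sum (f := fun i =>
          (eLpNorm (fun x => ‖iteratedFDeriv ℝ i f₁ x‖) ⊤ volume).toReal)
        (fun _ _ => ENNReal.toReal_nonneg) (Finset.mem_range.2 (by omega))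
    · refine (hptw f₂ hf₂' hf₂T i y).trans (le_trans ?_ (le_max_right _ _))
      exact Finset.single_le_sum (f := fun i =>
          (eLpNorm (fun x => ‖iteratedFDeriv ℝ i f₂ x‖) ⊤ volume).toReal)
        (fun _ _ => ENNReal.toReal_nonneg) (Finset.mem_range.2 (by omega))
  -- the pointwise estimate
  have hpoint : ∀ j, j ≤ k → ∀ x,
      ‖iteratedFDeriv ℝ j (fun z => g (z + f₁ z) - g (z + f₂ z)) x‖ ≤
        K * Bg * (1 + Bf) ^ k * ∑ a ∈ Finset.range (k + 1),
          ‖iteratedFDeriv ℝ a (fun z => f₁ z - f₂ z) x‖ :=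
    fun j hj x => hkey g f₁ f₂ hg' hf₁' hf₂' Bg Bf hBg0 hBf0 hgb hfb j hj x
  set c₀ : ℝ := K * Bg * (1 + Bf) ^ k with hc₀def
  have hc₀0 : 0 ≤ c₀ :=
    mul_nonneg (mul_nonneg hK0 hBg0) (pow_nonneg (by linarith) _)
  have hmeasu : ∀ a : ℕ, AEStronglyMeasurable
      (fun x => ‖iteratedFDeriv ℝ a (fun z => f₁ z - f₂ z) x‖)
      (volume : Measure (Fin d → ℝ)) := fun a =>
    ((hu.continuous_iteratedFDeriv (by exact_mod_cast le_top)).norm).aestronglyMeasurable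
  have hSu : ∀ j, j ≤ k →
      eLpNorm (fun x => ‖iteratedFDeriv ℝ j (fun z => g (z + f₁ z) - g (z + f₂ z)) x‖) p volume ≤
        ENNReal.ofReal c₀ * ∑ a ∈ Finset.range (k + 1),
          eLpNorm (fun x => ‖iteratedFDeriv ℝ a (fun z => f₁ z - f₂ z) x‖) p volume := by
    intro j hj
    have h1 : eLpNorm
        (fun x => ‖iteratedFDeriv ℝ j (fun z => g (z + f₁ z) - g (z + f₂ z)) x‖) p volume ≤
        eLpNorm (fun x => c₀ * ∑ a ∈ Finset.range (k + 1),
          ‖iteratedFDeriv ℝ a (fun z => f₁ z - f₂ z) x‖) p volume := by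
      apply eLpNorm_mono_real
      intro x
      rw [Real.norm_eq_abs, abs_norm]
      exact hpoint j hj x
    refine h1.trans ?_
    have h2 : (fun x => c₀ * ∑ a ∈ Finset.range (k + 1),
        ‖iteratedFDeriv ℝ a (fun z => f₁ z - f₂ z) x‖) =
        c₀ • fun x => ∑ a ∈ Finset.range (k + 1),
          ‖iteratedFDeriv ℝ a (fun z => f₁ z - f₂ z) x‖ := rfl
    rw [h2, eLpNorm_const_smul, Real.enorm_eq_ofReal hc₀0]
    refine mul_le_mul_right ?_ _
    have h3 : (fun x => ∑ a ∈ Finset.range (k + 1),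
        ‖iteratedFDeriv ℝ a (fun z => f₁ z - f₂ z) x‖) =
        ∑ a ∈ Finset.range (k + 1),
          (fun x => ‖iteratedFDeriv ℝ a (fun z => f₁ z - f₂ z) x‖) := by
      funext x; simp
    rw [h3]
    exact eLpNorm_sum_le (fun a _ => hmeasu a) hp
  -- comparison of the real constants with the ENNReal Sobolev norms
  have hofBg : ENNReal.ofReal Bg ≤ sobolevNorm d (k + 1) ⊤ g := by
    rw [hBgdef, ENNReal.ofReal_sum_of_nonneg (fun _ _ => ENNReal.toReal_nonneg)]
    exact Finset.sum_le_sum fun i _ => ENNReal.ofReal_toReal_le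
  have hofB₁ : ENNReal.ofReal B₁ ≤ sobolevNorm d k ⊤ f₁ := by
    rw [hB₁def, ENNReal.ofReal_sum_of_nonneg (fun _ _ => ENNReal.toReal_nonneg)]
    exact Finset.sum_le_sum fun i _ => ENNReal.ofReal_toReal_le
  have hofB₂ : ENNReal.ofReal B₂ ≤ sobolevNorm d k ⊤ f₂ := by
    rw [hB₂def, ENNReal.ofReal_sum_of_nonneg (fun _ _ => ENNReal.toReal_nonneg)]
    exact Finset.sum_le_sum fun i _ => ENNReal.ofReal_toReal_le
  have hofBf : ENNReal.ofReal Bf ≤ max (sobolevNorm d k ⊤ f₁) (sobolevNorm d k ⊤ f₂) := by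
    rcases le_total B₁ B₂ with h | h
    · rw [hBfdef, max_eq_right h]
      exact hofB₂.trans (le_max_right _ _)
    · rw [hBfdef, max_eq_left h]
      exact hofB₁.trans (le_max_left _ _)
  have hof1Bf : ENNReal.ofReal (1 + Bf) ≤
      1 + max (sobolevNorm d k ⊤ f₁) (sobolevNorm d k ⊤ f₂) := by
    rw [ENNReal.ofReal_add zero_le_one hBf0, ENNReal.ofReal_one]
    exact add_le_add le_rfl hofBf
  have hofc : ENNReal.ofReal c₀ ≤ ENNReal.ofReal K * sobolevNorm d (k + 1) ⊤ g *
      (1 + max (sobolevNorm d k ⊤ f₁) (sobolevNorm d k ⊤ f₂)) ^ k := by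
    rw [hc₀def, ENNReal.ofReal_mul (mul_nonneg hK0 hBg0), ENNReal.ofReal_mul hK0,
      ENNReal.ofReal_pow (by linarith : (0:ℝ) ≤ 1 + Bf)]
    gcongr
  have hfun : ((g ∘ fun x => x + f₁ x) - (g ∘ fun x => x + f₂ x)) =
      fun z => g (z + f₁ z) - g (z + f₂ z) := rfl
  have hfun2 : (f₁ - f₂) = fun z => f₁ z - f₂ z := rfl
  have hsobu : sobolevNorm d k p (f₁ - f₂) = ∑ a ∈ Finset.range (k + 1),
      eLpNorm (fun x => ‖iteratedFDeriv ℝ a (fun z => f₁ z - f₂ z) x‖) p volume := by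
    simp only [sobolevNorm, hfun2]
  calc sobolevNorm d k p ((g ∘ fun x => x + f₁ x) - (g ∘ fun x => x + f₂ x))
      = ∑ j ∈ Finset.range (k + 1), eLpNorm
          (fun x => ‖iteratedFDeriv ℝ j (fun z => g (z + f₁ z) - g (z + f₂ z)) x‖) p volume := by
        simp only [sobolevNorm, hfun]
    _ ≤ ∑ _j ∈ Finset.range (k + 1), (ENNReal.ofReal c₀ * ∑ a ∈ Finset.range (k + 1),
          eLpNorm (fun x => ‖iteratedFDeriv ℝ a (fun z => f₁ z - f₂ z) x‖) p volume) :=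
        Finset.sum_le_sum fun j hj => hSu j (by have := Finset.mem_range.1 hj; omega)
    _ = ((k + 1 : ℕ) : ENNReal) * (ENNReal.ofReal c₀ * sobolevNorm d k p (f₁ - f₂)) := by
        rw [Finset.sum_const, Finset.card_range, nsmul_eq_mul, hsobu]
    _ ≤ ((k + 1 : ℕ) : ENNReal) * ((ENNReal.ofReal K * sobolevNorm d (k + 1) ⊤ g *
          (1 + max (sobolevNorm d k ⊤ f₁) (sobolevNorm d k ⊤ f₂)) ^ k) *
          sobolevNorm d k p (f₁ - f₂)) :=
        mul_le_mul_right (mul_le_mul_left hofc _) _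
    _ = ((((k + 1 : ℕ) : NNReal) * Real.toNNReal K : NNReal) : ENNReal) *
          sobolevNorm d (k + 1) ⊤ g *
          (1 + max (sobolevNorm d k ⊤ f₁) (sobolevNorm d k ⊤ f₂)) ^ k *
          sobolevNorm d k p (f₁ - f₂) := by
        rw [ENNReal.coe_mul]
        rw [show (Real.toNNReal K : ENNReal) = ENNReal.ofReal K from rfl]
        push_cast
        ring
end
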